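/- arXiv:2604.15437 — 3 statements merged into one kernel-verified Lean document; each statement's English description precedes it below -/
import Mathlib

section
/- Let H be a g×g symmetric positive definite matrix, Φ a g×g symmetric positive definite matrix, and A a p×g matrix of full row rank. Define Γ = A'(A H⁻¹ A')⁻¹ A H⁻¹ and M = A'(AA')⁻¹ (A H⁻¹ A') (A H⁻¹ Φ H⁻¹ A')⁻¹ (A H⁻¹ A') (AA')⁻¹ A. Then M is a generalized inverse of Γ Φ Γ', i.e. (Γ Φ Γ') M (Γ Φ Γ') = Γ Φ Γ'. -/
open Matrix

lemma conj_posDef_aux {p g : ℕ} {B : Matrix (Fin g) (Fin g) ℝ} (hB : B.PosDef)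
    (A : Matrix (Fin p) (Fin g) ℝ) (hA : Function.Injective fun x : Fin p → ℝ => x ᵥ* A) :
    (A * B * Aᵀ).PosDef := by
  refine Matrix.PosDef.of_dotProduct_mulVec_pos ?_ ?_
  · have := isHermitian_mul_mul_conjTranspose A hB.isHermitian
    rwa [conjTranspose_eq_transpose_of_trivial] at this
  · intro x hx
    have hy : x ᵥ* A ≠ 0 := by
      intro h
      exact hx (hA (by simpa using h))
    have h1 : (A * B * Aᵀ) *ᵥ x = A *ᵥ (B *ᵥ (x ᵥ* A)) := by
      rw [← mulVec_transpose, mulVec_mulVec, mulVec_mulVec]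
    rw [h1, star_trivial, dotProduct_mulVec]
    have := hB.dotProduct_mulVec_pos hy
    rwa [star_trivial] at this

/-- For `H`, `Φ` symmetric positive definite and `A` of full row rank, with
`Γ = A'(A H⁻¹ A')⁻¹ A H⁻¹` and
`M = A'(AA')⁻¹ (A H⁻¹ A') (A H⁻¹ Φ H⁻¹ A')⁻¹ (A H⁻¹ A') (AA')⁻¹ A`,
the matrix `M` is a generalized inverse of `Γ Φ Γ'`: `(Γ Φ Γ') M (Γ Φ Γ') = Γ Φ Γ'`. -/
theorem generalized_inverse_of_gamma_phi_gamma
    {g p : ℕ} (H Φ : Matrix (Fin g) (Fin g) ℝ)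
    (hH : H.PosDef) (hΦ : Φ.PosDef)
    (A : Matrix (Fin p) (Fin g) ℝ) (hA : A.rank = p) (hpg : p ≤ g)
    (Γ : Matrix (Fin g) (Fin g) ℝ)
    (hΓ : Γ = A.transpose * (A * H⁻¹ * A.transpose)⁻¹ * A * H⁻¹)
    (M : Matrix (Fin g) (Fin g) ℝ)
    (hM : M = A.transpose * (A * A.transpose)⁻¹ * (A * H⁻¹ * A.transpose)
        * (A * H⁻¹ * Φ * H⁻¹ * A.transpose)⁻¹ * (A * H⁻¹ * A.transpose)
        * (A * A.transpose)⁻¹ * A) :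
    (Γ * Φ * Γ.transpose) * M * (Γ * Φ * Γ.transpose) = Γ * Φ * Γ.transpose := by
  -- rows of A are linearly independent
  have hind : LinearIndependent ℝ (fun i => A i) := by
    rw [linearIndependent_iff_card_eq_finrank_span]
    rw [Set.finrank, show (Set.range fun i => A i) = Set.range A.row from rfl,
      ← rank_eq_finrank_span_row, hA, Fintype.card_fin]
  have hinj : Function.Injective fun x : Fin p → ℝ => x ᵥ* A :=
    Matrix.vecMul_injective_iff.mpr hind
  -- symmetry facts
  have hHt : Hᵀ = H := by
    have := hH.isHermitian
    rwa [IsHermitian, conjTranspose_eq_transpose_of_trivial] at this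
  have hHit : (H⁻¹)ᵀ = H⁻¹ := by rw [transpose_nonsing_inv, hHt]
  -- positive definiteness of the three p×p matrices
  have hD : (A * Aᵀ).PosDef := by
    have := conj_posDef_aux Matrix.PosDef.one A hinj
    rwa [Matrix.mul_one] at this
  have hB : (A * H⁻¹ * Aᵀ).PosDef := conj_posDef_aux hH.inv A hinj
  have hC : (A * H⁻¹ * Φ * H⁻¹ * Aᵀ).PosDef := by
    have hmid : (H⁻¹ * Φ * H⁻¹).PosDef := by
      have hHinj : Function.Injective fun x : Fin g → ℝ => x ᵥ* H⁻¹ := by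
        rw [show (fun x : Fin g → ℝ => x ᵥ* H⁻¹) = (H⁻¹).vecMul from rfl,
          vecMul_injective_iff_isUnit]
        exact hH.inv.isUnit
      have := conj_posDef_aux hΦ H⁻¹ hHinj
      rwa [hHit] at this
    have := conj_posDef_aux hmid A hinj
    rwa [show A * (H⁻¹ * Φ * H⁻¹) * Aᵀ = A * H⁻¹ * Φ * H⁻¹ * Aᵀ by
      simp only [Matrix.mul_assoc]] at this
  -- determinant units
  have hdB : IsUnit (A * H⁻¹ * Aᵀ).det := (isUnit_iff_isUnit_det _).mp hB.isUnit
  have hdC : IsUnit (A * H⁻¹ * Φ * H⁻¹ * Aᵀ).det := (isUnit_iff_isUnit_det _).mp hC.isUnit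
  have hdD : IsUnit (A * Aᵀ).det := (isUnit_iff_isUnit_det _).mp hD.isUnit
  -- symmetry of B⁻¹
  have hBt : (A * H⁻¹ * Aᵀ)ᵀ = A * H⁻¹ * Aᵀ := by
    rw [transpose_mul, transpose_mul, transpose_transpose, hHit, Matrix.mul_assoc]
  have hBit : ((A * H⁻¹ * Aᵀ)⁻¹)ᵀ = (A * H⁻¹ * Aᵀ)⁻¹ := by
    rw [transpose_nonsing_inv, hBt]
  -- transpose of Γ
  have hGt : Γᵀ = H⁻¹ * Aᵀ * (A * H⁻¹ * Aᵀ)⁻¹ * A := by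
    rw [hΓ, transpose_mul, transpose_mul, transpose_mul, transpose_transpose, hHit, hBit]
    simp only [Matrix.mul_assoc]
  -- collapsing rewrite rules (stated in right-associated simp-normal form)
  have ra : ∀ X : Matrix (Fin p) (Fin g) ℝ, A * (Aᵀ * ((A * Aᵀ)⁻¹ * X)) = X := by
    intro X
    simp only [← Matrix.mul_assoc]
    rw [Matrix.mul_nonsing_inv _ hdD, Matrix.one_mul]
  have rd : ∀ X : Matrix (Fin p) (Fin g) ℝ, (A * Aᵀ)⁻¹ * (A * (Aᵀ * X)) = X := by
    intro X
    simp only [← Matrix.mul_assoc]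
    rw [Matrix.mul_assoc (A * Aᵀ)⁻¹ A Aᵀ, Matrix.nonsing_inv_mul _ hdD, Matrix.one_mul]
  have rb : ∀ X : Matrix (Fin p) (Fin g) ℝ,
      A * (H⁻¹ * (Aᵀ * ((A * (H⁻¹ * Aᵀ))⁻¹ * X))) = X := by
    intro X
    simp only [← Matrix.mul_assoc]
    rw [Matrix.mul_nonsing_inv _ hdB, Matrix.one_mul]
  have rb' : ∀ X : Matrix (Fin p) (Fin g) ℝ,
      (A * (H⁻¹ * Aᵀ))⁻¹ * (A * (H⁻¹ * (Aᵀ * X))) = X := by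
    intro X
    simp only [← Matrix.mul_assoc]
    rw [Matrix.mul_assoc (A * H⁻¹ * Aᵀ)⁻¹ A H⁻¹,
      Matrix.mul_assoc (A * H⁻¹ * Aᵀ)⁻¹ (A * H⁻¹) Aᵀ,
      Matrix.nonsing_inv_mul _ hdB, Matrix.one_mul]
  have rc' : ∀ X : Matrix (Fin p) (Fin g) ℝ,
      (A * (H⁻¹ * (Φ * (H⁻¹ * Aᵀ))))⁻¹ * (A * (H⁻¹ * (Φ * (H⁻¹ * (Aᵀ * X))))) = X := by
    intro X
    simp only [← Matrix.mul_assoc]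
    rw [Matrix.mul_assoc (A * H⁻¹ * Φ * H⁻¹ * Aᵀ)⁻¹ A H⁻¹,
      Matrix.mul_assoc (A * H⁻¹ * Φ * H⁻¹ * Aᵀ)⁻¹ (A * H⁻¹) Φ,
      Matrix.mul_assoc (A * H⁻¹ * Φ * H⁻¹ * Aᵀ)⁻¹ (A * H⁻¹ * Φ) H⁻¹,
      Matrix.mul_assoc (A * H⁻¹ * Φ * H⁻¹ * Aᵀ)⁻¹ (A * H⁻¹ * Φ * H⁻¹) Aᵀ,
      Matrix.nonsing_inv_mul _ hdC, Matrix.one_mul]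
  rw [hGt, hΓ, hM]
  simp only [Matrix.mul_assoc, ra, rd, rb, rb', rc']
end

section
/- If z ~ N(Rρ, R) is a multivariate normal random vector whose covariance matrix R has rank r, and R⁻ is any symmetric matrix satisfying R R⁻ R = R, then the quadratic form z' R⁻ z has a noncentral chi-square distribution with r degrees of freedom and noncentrality parameter ρ' R ρ. -/
open MeasureTheory ProbabilityTheory Matrix

/-- The standard Gaussian measure on `Fin n → ℝ`: product of i.i.d. standard normals. -/
noncomputable def stdGaussian (n : ℕ) : Measure (Fin n → ℝ) :=
  Measure.pi fun _ => gaussianReal 0 1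

section Aux

lemma lintegral_pi_prod : ∀ (n : ℕ) (f : Fin n → ℝ → ENNReal), (∀ i, Measurable (f i)) →
    ∫⁻ x : Fin n → ℝ, ∏ i, f i (x i) ∂(Measure.pi fun _ => (volume : Measure ℝ))
      = ∏ i, ∫⁻ y, f i y := by
  intro n
  induction n with
  | zero =>
      intro f hf
      simp [lintegral_const, Measure.pi_univ]
  | succ n ih =>
      intro f hf
      have hmp := (measurePreserving_piFinSuccAbove (fun _ : Fin (n+1) => (volume : Measure ℝ)) 0)
      have hH : Measurable (fun z : ℝ × (Fin n → ℝ) => f 0 z.1 * ∏ j : Fin n, f j.succ (z.2 j)) := by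
        refine ((hf 0).comp measurable_fst).mul ?_
        exact (Finset.measurable_prod _ fun j _ => (hf j.succ).comp ((measurable_pi_apply j).comp measurable_snd))
      calc ∫⁻ x : Fin (n+1) → ℝ, ∏ i, f i (x i) ∂(Measure.pi fun _ => (volume : Measure ℝ))
          = ∫⁻ x : Fin (n+1) → ℝ, (fun z : ℝ × (Fin n → ℝ) => f 0 z.1 * ∏ j : Fin n, f j.succ (z.2 j))
              ((MeasurableEquiv.piFinSuccAbove (fun _ => ℝ) 0) x) ∂(Measure.pi fun _ => (volume : Measure ℝ)) := by
            refine lintegral_congr fun x => ?_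
            simp [MeasurableEquiv.piFinSuccAbove, Fin.prod_univ_succ, Fin.zero_succAbove, Fin.tail]
        _ = ∫⁻ z : ℝ × (Fin n → ℝ), f 0 z.1 * ∏ j : Fin n, f j.succ (z.2 j)
              ∂((volume : Measure ℝ).prod (Measure.pi fun _ => (volume : Measure ℝ))) := by
            rw [← hmp.lintegral_comp hH]
        _ = (∫⁻ y, f 0 y) * ∏ j : Fin n, ∫⁻ y, f j.succ y := by
            rw [lintegral_prod_mul (f := f 0) (g := fun y : Fin n → ℝ => ∏ j : Fin n, f j.succ (y j)) ((hf 0).aemeasurable)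
              ((Finset.measurable_prod _ fun j _ => (hf j.succ).comp (measurable_pi_apply j)).aemeasurable)]
            rw [ih (fun j => f j.succ) (fun j => hf j.succ)]
        _ = ∏ i, ∫⁻ y, f i y := (Fin.prod_univ_succ (fun i => ∫⁻ y, f i y)).symm

lemma stdGaussian_eq_withDensity (n : ℕ) :
    stdGaussian n = volume.withDensity (fun x => ∏ i, gaussianPDF 0 1 (x i)) := by
  refine (Measure.pi_eq fun s hs => ?_)
  have hmeas : ∀ i : Fin n, Measurable ((s i).indicator (gaussianPDF 0 1)) :=
    fun i => (measurable_gaussianPDF 0 1).indicator (hs i)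
  rw [withDensity_apply _ (MeasurableSet.univ_pi hs),
    ← lintegral_indicator (MeasurableSet.univ_pi hs) _]
  have hind : ∀ x : Fin n → ℝ,
      (Set.pi Set.univ s).indicator (fun x => ∏ i, gaussianPDF 0 1 (x i)) x
        = ∏ i, (s i).indicator (gaussianPDF 0 1) (x i) := by
    intro x
    by_cases hx : x ∈ Set.pi Set.univ s
    · rw [Set.indicator_of_mem hx]
      exact Finset.prod_congr rfl fun i _ =>
        (Set.indicator_of_mem (hx i (Set.mem_univ i)) _).symm
    · rw [Set.indicator_of_notMem hx]
      have : ∃ i, x i ∉ s i := by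
        by_contra h
        push_neg at h
        exact hx fun i _ => h i
      obtain ⟨i, hi⟩ := this
      exact (Finset.prod_eq_zero (Finset.mem_univ i)
        (Set.indicator_of_notMem hi _)).symm
  calc ∫⁻ x, (Set.pi Set.univ s).indicator (fun x => ∏ i, gaussianPDF 0 1 (x i)) x
      = ∫⁻ x : Fin n → ℝ, ∏ i, (s i).indicator (gaussianPDF 0 1) (x i)
        ∂(Measure.pi fun _ => (volume : Measure ℝ)) := by
        rw [← volume_pi]; exact lintegral_congr hind
    _ = ∏ i, ∫⁻ y, (s i).indicator (gaussianPDF 0 1) y := lintegral_pi_prod n _ hmeas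
    _ = ∏ i, gaussianReal 0 1 (s i) := by
        refine Finset.prod_congr rfl fun i _ => ?_
        rw [gaussianReal_apply 0 one_ne_zero (s i), lintegral_indicator (hs i) _]

lemma map_withDensity_equiv {α β : Type*} [MeasurableSpace α] [MeasurableSpace β]
    (e : α ≃ᵐ β) (μ : Measure α) (f : β → ENNReal) (hf : Measurable f) :
    Measure.map e (μ.withDensity (f ∘ e)) = (Measure.map e μ).withDensity f := by
  ext s hs
  rw [Measure.map_apply e.measurable hs, withDensity_apply _ (e.measurable hs),
    withDensity_apply _ hs, setLIntegral_map hs hf e.measurable]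
  rfl

lemma dotProduct_mulVec_mulVec {a b c : ℕ} (B : Matrix (Fin a) (Fin b) ℝ)
    (C : Matrix (Fin a) (Fin c) ℝ) (x : Fin b → ℝ) (y : Fin c → ℝ) :
    (B.mulVec x) ⬝ᵥ (C.mulVec y) = x ⬝ᵥ ((Bᵀ * C).mulVec y) := by
  conv_rhs => rw [← Matrix.mulVec_mulVec, Matrix.dotProduct_mulVec, Matrix.vecMul_transpose]

lemma sq_sum_mulVec {m : ℕ} {M : Matrix (Fin m) (Fin m) ℝ} (h : Mᵀ * M = 1)
    (v : Fin m → ℝ) : ∑ i, (M.mulVec v i) ^ 2 = ∑ i, v i ^ 2 := by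
  have := dotProduct_mulVec_mulVec M M v v
  rw [h, Matrix.one_mulVec] at this
  simpa [dotProduct, pow_two] using this

lemma measurable_mulVec {a b : ℕ} (M : Matrix (Fin a) (Fin b) ℝ) :
    Measurable (fun v : Fin b → ℝ => M.mulVec v) := by
  refine measurable_pi_lambda _ fun i => ?_
  simp only [Matrix.mulVec, dotProduct]
  exact Finset.measurable_sum _ fun j _ => (measurable_pi_apply j).const_mul _

lemma map_mulVec_stdGaussian {m : ℕ} (M : Matrix (Fin m) (Fin m) ℝ)
    (hM : M * Mᵀ = 1) :
    Measure.map (fun v => M.mulVec v) (stdGaussian m) = stdGaussian m := by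
  have hMt : Mᵀ * M = 1 := mul_eq_one_comm.mp hM
  have hInv : Invertible M := invertibleOfRightInverse _ _ hM
  have hdet : |M.det| = 1 := by
    have h1 : M.det * M.det = 1 := by
      have := congrArg Matrix.det hM
      rwa [Matrix.det_mul, Matrix.det_transpose, Matrix.det_one] at this
    rcases mul_self_eq_one_iff.mp h1 with h | h <;> simp [h]
  have hdet0 : M.det ≠ 0 := fun h => by simp [h] at hdet
  let e : (Fin m → ℝ) ≃ᵐ (Fin m → ℝ) :=
    ((M.toLinearEquiv' hInv).toContinuousLinearEquiv).toHomeomorph.toMeasurableEquiv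
  have he : ⇑e = fun v => M.mulVec v := by
    funext v
    exact Matrix.toLin'_apply M v
  have hvol : Measure.map (⇑e) (volume : Measure (Fin m → ℝ)) = volume := by
    have : ⇑e = ⇑(Matrix.toLin' M) := by
      rw [he]; funext v; rw [Matrix.toLin'_apply]
    rw [this, Real.map_matrix_volume_pi_eq_smul_volume_pi hdet0, abs_inv, hdet]
    simp
  set F : (Fin m → ℝ) → ENNReal := fun x => ∏ i, gaussianPDF 0 1 (x i) with hF
  have hFmeas : Measurable F :=
    Finset.measurable_prod _ fun i _ => (measurable_gaussianPDF 0 1).comp (measurable_pi_apply i)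
  have hsumdiv : ∀ w : Fin m → ℝ, ∑ i, (-(w i) ^ 2 / 2) = -(∑ i, (w i) ^ 2) / 2 := by
    intro w
    rw [← Finset.sum_div, Finset.sum_neg_distrib]
  have hFinvar : ∀ v, F (M.mulVec v) = F v := by
    intro v
    have hsum := sq_sum_mulVec hMt v
    simp only [hF, gaussianPDF, gaussianPDFReal, sub_zero, NNReal.coe_one, mul_one]
    rw [← ENNReal.ofReal_prod_of_nonneg, ← ENNReal.ofReal_prod_of_nonneg]
    · congr 1
      rw [Finset.prod_mul_distrib, Finset.prod_mul_distrib, ← Real.exp_sum, ← Real.exp_sum,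
        hsumdiv, hsumdiv, hsum]
    · intro i _; positivity
    · intro i _; positivity
  have hSG : stdGaussian m = volume.withDensity F := stdGaussian_eq_withDensity m
  have hcomp : (F ∘ ⇑e.symm) ∘ ⇑e = F := by
    funext x
    simp only [Function.comp_apply, MeasurableEquiv.symm_apply_apply]
  have hsymm : F ∘ ⇑e.symm = F := by
    funext x
    have hx : x = M.mulVec (e.symm x) := by
      conv_lhs => rw [← e.apply_symm_apply x]
      rw [he]
    show F (e.symm x) = F x
    conv_rhs => rw [hx, hFinvar]
  rw [hSG]
  calc Measure.map (fun v => M.mulVec v) (volume.withDensity F)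
      = Measure.map (⇑e) (volume.withDensity ((F ∘ ⇑e.symm) ∘ ⇑e)) := by rw [hcomp, he]
    _ = (Measure.map (⇑e) volume).withDensity (F ∘ ⇑e.symm) :=
        map_withDensity_equiv e volume _ (hFmeas.comp e.symm.measurable)
    _ = volume.withDensity F := by rw [hvol, hsymm]

lemma map_restrict_stdGaussian {n r : ℕ} (hrn : r ≤ n) :
    Measure.map (fun x : Fin n → ℝ => fun i : Fin r => x (Fin.castLE hrn i))
      (stdGaussian n) = stdGaussian r := by
  have hmeas : Measurable (fun x : Fin n → ℝ => fun i : Fin r => x (Fin.castLE hrn i)) :=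
    measurable_pi_lambda _ fun i => measurable_pi_apply _
  refine (Measure.pi_eq fun s hs => ?_).symm
  classical
  set t : Fin n → Set ℝ := fun j => if h : (j : ℕ) < r then s ⟨j, h⟩ else Set.univ with ht
  have hts : ∀ j, MeasurableSet (t j) := by
    intro j
    by_cases h : (j : ℕ) < r
    · simp only [ht, dif_pos h]; exact hs _
    · simp only [ht, dif_neg h]; exact MeasurableSet.univ
  have hpre : (fun x : Fin n → ℝ => fun i : Fin r => x (Fin.castLE hrn i)) ⁻¹'
      (Set.pi Set.univ s) = Set.pi Set.univ t := by
    ext x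
    simp only [Set.mem_preimage, Set.mem_pi, Set.mem_univ, forall_true_left, true_implies]
    constructor
    · intro h j
      by_cases hj : (j : ℕ) < r
      · simp only [ht, dif_pos hj]
        exact h ⟨j, hj⟩
      · simp [ht, dif_neg hj]
    · intro h i
      have := h (Fin.castLE hrn i)
      simp only [ht] at this
      rw [dif_pos (by simpa using i.isLt)] at this
      exact this
  rw [Measure.map_apply hmeas (MeasurableSet.univ_pi hs), hpre]
  rw [show stdGaussian n (Set.pi Set.univ t) = ∏ j, gaussianReal 0 1 (t j) from
    Measure.pi_pi _ _]
  calc ∏ j : Fin n, gaussianReal 0 1 (t j)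
      = ∏ j ∈ Finset.univ.image (fun i : Fin r => Fin.castLE hrn i),
          gaussianReal 0 1 (t j) := by
        refine (Finset.prod_subset (Finset.subset_univ _) ?_).symm
        intro j _ hj
        have hnot : ¬ (j : ℕ) < r := by
          intro h
          exact hj (Finset.mem_image.mpr ⟨⟨j, h⟩, Finset.mem_univ _, Fin.ext rfl⟩)
        simp [ht, dif_neg hnot]
    _ = ∏ i : Fin r, gaussianReal 0 1 (t (Fin.castLE hrn i)) := by
        refine Finset.prod_image ?_
        intro a _ b _ hab
        exact Fin.castLE_injective hrn hab
    _ = ∏ i : Fin r, gaussianReal 0 1 (s i) := by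
        refine Finset.prod_congr rfl fun i _ => ?_
        congr 1
        simp only [ht]
        rw [dif_pos (by simpa using i.isLt)]
        congr 1

lemma exists_Q {n r : ℕ} (A : Matrix (Fin n) (Fin n) ℝ) (hsymm : Aᵀ = A)
    (hidem : A * A = A) (hrank : A.rank = r) :
    ∃ Q : Matrix (Fin n) (Fin r) ℝ, Qᵀ * Q = 1 ∧ Q * Qᵀ = A := by
  classical
  have hHerm : A.IsHermitian := by
    rw [Matrix.IsHermitian, Matrix.conjTranspose_eq_transpose_of_trivial, hsymm]
  set e := hHerm.eigenvalues with he
  set U : Matrix (Fin n) (Fin n) ℝ := (hHerm.eigenvectorUnitary : Matrix (Fin n) (Fin n) ℝ) with hU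
  have hspec : A = U * Matrix.diagonal e * star U := by
    have := hHerm.spectral_theorem
    simpa using this
  have hUstar : star U * U = 1 := by
    exact Matrix.mem_unitaryGroup_iff'.mp hHerm.eigenvectorUnitary.2
  have hUU : U * star U = 1 := by
    exact Matrix.mem_unitaryGroup_iff.mp hHerm.eigenvectorUnitary.2
  have hD : Matrix.diagonal e * Matrix.diagonal e = Matrix.diagonal e := by
    have h1 : star U * A * U = Matrix.diagonal e := by
      rw [hspec]
      calc star U * (U * Matrix.diagonal e * star U) * U
          = (star U * U) * Matrix.diagonal e * (star U * U) := by simp only [Matrix.mul_assoc]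
        _ = Matrix.diagonal e := by rw [hUstar]; simp
    calc Matrix.diagonal e * Matrix.diagonal e
        = (star U * A * U) * (star U * A * U) := by rw [h1]
      _ = star U * (A * (U * star U) * A) * U := by simp only [Matrix.mul_assoc]
      _ = star U * (A * A) * U := by rw [hUU]; simp [Matrix.mul_assoc]
      _ = star U * A * U := by rw [hidem, Matrix.mul_assoc]
      _ = Matrix.diagonal e := h1
  have heig : ∀ i, e i = 0 ∨ e i = 1 := by
    intro i
    have := congrArg (fun M => M i i) hD
    simp only [Matrix.diagonal_mul_diagonal, Matrix.diagonal_apply_eq] at this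
    have h0 : e i * (e i - 1) = 0 := by
      rw [mul_sub, this]; ring
    rcases mul_eq_zero.mp h0 with h | h
    · exact Or.inl h
    · exact Or.inr (by linarith)
  have hcard : Fintype.card {i // e i ≠ 0} = r := by
    rw [← hHerm.rank_eq_card_non_zero_eigs]
    exact hrank
  let φ : Fin r ≃ {i // e i ≠ 0} := (Fintype.equivFinOfCardEq hcard).symm
  refine ⟨Matrix.of fun i j => U i ((φ j : {i // e i ≠ 0}) : Fin n), ?_, ?_⟩
  · ext a b
    have h1 : (star U * U) ((φ a : {i // e i ≠ 0}) : Fin n) ((φ b : {i // e i ≠ 0}) : Fin n)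
        = (1 : Matrix (Fin n) (Fin n) ℝ) ((φ a : {i // e i ≠ 0}) : Fin n)
          ((φ b : {i // e i ≠ 0}) : Fin n) := by rw [hUstar]
    simp only [Matrix.mul_apply, Matrix.star_apply, star_trivial] at h1
    simp only [Matrix.mul_apply, Matrix.transpose_apply, Matrix.of_apply]
    rw [h1]
    by_cases hab : a = b
    · subst hab
      simp [Matrix.one_apply]
    · have : ((φ a : {i // e i ≠ 0}) : Fin n) ≠ ((φ b : {i // e i ≠ 0}) : Fin n) := by
        intro h
        exact hab (φ.injective (Subtype.coe_injective h))
      simp [Matrix.one_apply, hab, this]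
  · ext i l
    have hA : A i l = ∑ k, (U i k * e k) * U l k := by
      rw [hspec, Matrix.mul_apply]
      refine Finset.sum_congr rfl fun k _ => ?_
      rw [Matrix.mul_diagonal, Matrix.star_apply, star_trivial]
    simp only [Matrix.mul_apply, Matrix.transpose_apply, Matrix.of_apply]
    rw [hA]
    have step1 : ∑ j : Fin r, U i ((φ j : {i // e i ≠ 0}) : Fin n) * U l ((φ j : {i // e i ≠ 0}) : Fin n)
        = ∑ s : {i // e i ≠ 0}, U i (s : Fin n) * U l (s : Fin n) :=
      Equiv.sum_comp φ (fun s : {i // e i ≠ 0} => U i (s : Fin n) * U l (s : Fin n))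
    rw [step1]
    have step2 : ∑ s : {i // e i ≠ 0}, U i (s : Fin n) * U l (s : Fin n)
        = ∑ s : {i // e i ≠ 0}, U i (s : Fin n) * e (s : Fin n) * U l (s : Fin n) := by
      refine Finset.sum_congr rfl fun s _ => ?_
      rcases heig (s : Fin n) with h | h
      · exact absurd h s.2
      · rw [h]; ring
    rw [step2, ← Finset.sum_subtype (Finset.univ.filter fun k => e k ≠ 0)
      (by intro k; simp) (fun k => U i k * e k * U l k)]
    refine Finset.sum_filter_of_ne ?_
    intro k _ hk
    intro h0
    apply hk
    rw [h0]
    ring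

lemma exists_O {n r : ℕ} (hrn : r ≤ n) (Q : Matrix (Fin n) (Fin r) ℝ)
    (hQ : Qᵀ * Q = 1) :
    ∃ O : Matrix (Fin n) (Fin n) ℝ, O * Oᵀ = 1 ∧
      ∀ (i : Fin r) (j : Fin n), O (Fin.castLE hrn i) j = Q j i := by
  classical
  -- columns of Q as elements of EuclideanSpace
  set c : Fin r → EuclideanSpace ℝ (Fin n) := fun i => WithLp.toLp 2 (fun j => Q j i) with hc
  have hortho : Orthonormal ℝ c := by
    rw [orthonormal_iff_ite]
    intro i j
    have := congrArg (fun M => M i j) hQ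
    simp only [Matrix.mul_apply, Matrix.transpose_apply, Matrix.one_apply] at this
    rw [← this]
    simp [EuclideanSpace.inner_eq_star_dotProduct, dotProduct, hc, mul_comm]
  set v : Fin n → EuclideanSpace ℝ (Fin n) := fun j =>
    if h : (j : ℕ) < r then c ⟨j, h⟩ else 0 with hv
  have hvrestrict : Orthonormal ℝ ((
      {j : Fin n | (j : ℕ) < r} : Set (Fin n)).restrict v) := by
    have hg : ∀ j : {j : Fin n | (j : ℕ) < r}, ({j : Fin n | (j : ℕ) < r} : Set (Fin n)).restrict v j
        = c ⟨(j : Fin n), j.2⟩ := by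
      intro j
      show v (j : Fin n) = _
      simp only [hv]
      rw [dif_pos (show ((j : Fin n) : ℕ) < r from j.2)]
    rw [show (({j : Fin n | (j : ℕ) < r} : Set (Fin n)).restrict v)
        = c ∘ (fun j : {j : Fin n | (j : ℕ) < r} => (⟨(j : Fin n), j.2⟩ : Fin r)) from
      funext hg]
    refine hortho.comp _ ?_
    intro a b hab
    have : ((a : Fin n) : ℕ) = ((b : Fin n) : ℕ) := by
      simpa [Fin.ext_iff] using hab
    exact Subtype.ext (Fin.ext this)
  obtain ⟨b, hb⟩ := hvrestrict.exists_orthonormalBasis_extension_of_card_eq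
    (by simp)
  refine ⟨Matrix.of fun i j => b i j, ?_, ?_⟩
  · ext i j
    have := b.orthonormal
    rw [orthonormal_iff_ite] at this
    have h := this i j
    simp only [Matrix.mul_apply, Matrix.transpose_apply, Matrix.of_apply, Matrix.one_apply]
    rw [← h]
    simp [EuclideanSpace.inner_eq_star_dotProduct, dotProduct, mul_comm]
  · intro i j
    have hmem : (Fin.castLE hrn i) ∈ ({j : Fin n | (j : ℕ) < r} : Set (Fin n)) := by
      simpa using i.isLt
    have := hb (Fin.castLE hrn i) hmem
    simp only [Matrix.of_apply]
    rw [this, hv]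
    simp only
    rw [dif_pos (show ((Fin.castLE hrn i : Fin n) : ℕ) < r from i.isLt)]
    simp [hc]

end Aux

/-- If `z ~ N(Rρ, R)` (realized as `z = Rρ + W u`, `W W' = R`, `u` i.i.d. standard normal)
with `R` symmetric positive semidefinite of rank `r`, and `R⁻` is any symmetric matrix with
`R R⁻ R = R`, then `z' R⁻ z` has a noncentral chi-square distribution with `r` degrees of
freedom and noncentrality `ρ' R ρ`: it is distributed as `∑ i : Fin r, (u i + μ i)²` for some
`μ` with `∑ μ i ² = ρ' R ρ` and `u` i.i.d. standard normal. -/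
theorem quadratic_form_gen_inverse_noncentral_chiSq
    {n r : ℕ} {Ω : Type*} [MeasurableSpace Ω] (P : Measure Ω) [IsProbabilityMeasure P]
    (R Rinv W : Matrix (Fin n) (Fin n) ℝ) (ρ : Fin n → ℝ)
    (hR : R.PosSemidef) (hrank : R.rank = r)
    (hRinv : Rinv.IsSymm) (hgen : R * Rinv * R = R)
    (hW : W * W.transpose = R)
    (z : Ω → Fin n → ℝ) (hz : Measurable z)
    (hlaw : Measure.map z P
      = Measure.map (fun u => R.mulVec ρ + W.mulVec u) (stdGaussian n)) :
    ∃ μv : Fin r → ℝ,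
      (∑ i, (μv i) ^ 2) = ρ ⬝ᵥ R.mulVec ρ ∧
      Measure.map (fun ω => z ω ⬝ᵥ Rinv.mulVec (z ω)) P
        = Measure.map (fun u => ∑ i, (u i + μv i) ^ 2) (stdGaussian r) := by
  classical
  have hrn : r ≤ n := by
    have h := Matrix.rank_le_card_width R
    rw [hrank, Fintype.card_fin] at h
    exact h
  set A := Wᵀ * Rinv * W with hA
  have hRsymm : Rᵀ = R := by
    rw [← Matrix.conjTranspose_eq_transpose_of_trivial]
    exact hR.1
  have hAsymm : Aᵀ = A := by
    rw [hA, Matrix.transpose_mul, Matrix.transpose_mul, Matrix.transpose_transpose,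
      hRinv.eq, Matrix.mul_assoc]
  have hWA : W * A = R * Rinv * W := by
    rw [hA, ← Matrix.mul_assoc, ← Matrix.mul_assoc, hW]
  have hAW : A * Wᵀ = Wᵀ * Rinv * R := by
    rw [hA, Matrix.mul_assoc (Wᵀ * Rinv) W Wᵀ, hW]
  have hWAWt : W * A * Wᵀ = R := by
    rw [hWA, Matrix.mul_assoc (R * Rinv) W Wᵀ, hW, hgen]
  have hAA2 : A * A = (Wᵀ * Rinv) * ((R * Rinv) * W) := by
    conv_lhs => rw [hA]
    rw [Matrix.mul_assoc (Wᵀ * Rinv) W A, hWA]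
  have h3 : A * A * A = A * A := by
    conv_lhs => rw [hAA2]
    rw [Matrix.mul_assoc (Wᵀ * Rinv) ((R * Rinv) * W) A,
      Matrix.mul_assoc (R * Rinv) W A, hWA, ← Matrix.mul_assoc (R * Rinv) (R * Rinv) W,
      ← Matrix.mul_assoc (R * Rinv) R Rinv, hgen, hAA2]
  have hAA : A * A = A := by
    set B := A * A - A with hB
    have hBt : Bᵀ = B := by
      rw [hB, Matrix.transpose_sub, Matrix.transpose_mul, hAsymm]
    have h4 : A * A * (A * A) = A * A := by
      rw [← Matrix.mul_assoc, h3, h3]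
    have hAAA' : A * (A * A) = A * A := by
      rw [← Matrix.mul_assoc, h3]
    have hBB : B * B = 0 := by
      rw [hB, Matrix.sub_mul, Matrix.mul_sub, Matrix.mul_sub, h4, h3, hAAA']
      simp
    have hB0 : B = 0 := by
      have : Bᴴ * B = 0 := by
        rw [Matrix.conjTranspose_eq_transpose_of_trivial, hBt, hBB]
      exact Matrix.conjTranspose_mul_self_eq_zero.mp this
    have := sub_eq_zero.mp (hB ▸ hB0)
    exact this
  have hArank : A.rank = r := by
    refine le_antisymm ?_ ?_
    · calc A.rank ≤ W.rank := by rw [hA]; exact Matrix.rank_mul_le_right (Wᵀ * Rinv) W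
        _ = (W * Wᵀ).rank := (Matrix.rank_self_mul_transpose W).symm
        _ = r := by rw [hW, hrank]
    · calc r = R.rank := hrank.symm
        _ = (W * A * Wᵀ).rank := by rw [hWAWt]
        _ ≤ (W * A).rank := Matrix.rank_mul_le_left (W * A) Wᵀ
        _ ≤ A.rank := Matrix.rank_mul_le_right W A
  obtain ⟨Q, hQtQ, hQQt⟩ := exists_Q A hAsymm hAA hArank
  obtain ⟨O, hOOt, hOQ⟩ := exists_O hrn Q hQtQ
  set w : Fin n → ℝ := Wᵀ.mulVec ρ with hw
  set μv : Fin r → ℝ := Qᵀ.mulVec w with hμ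
  have hwAw : w ⬝ᵥ A.mulVec w = ρ ⬝ᵥ R.mulVec ρ := by
    rw [hw, Matrix.mulVec_mulVec, dotProduct_mulVec_mulVec Wᵀ (A * Wᵀ) ρ ρ,
      Matrix.transpose_transpose, ← Matrix.mul_assoc, hWAWt]
  have hnc : (∑ i, (μv i) ^ 2) = ρ ⬝ᵥ R.mulVec ρ := by
    have h1 : (∑ i, (μv i) ^ 2) = μv ⬝ᵥ μv := by
      simp [dotProduct, sq]
    rw [h1, hμ, dotProduct_mulVec_mulVec Qᵀ Qᵀ w w, Matrix.transpose_transpose, hQQt, hwAw]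
  have hkey : ∀ u : Fin n → ℝ,
      (R.mulVec ρ + W.mulVec u) ⬝ᵥ Rinv.mulVec (R.mulVec ρ + W.mulVec u)
        = ∑ i, ((Qᵀ.mulVec u) i + μv i) ^ 2 := by
    intro u
    have hRHS : ∑ i, ((Qᵀ.mulVec u) i + μv i) ^ 2 = (u + w) ⬝ᵥ A.mulVec (u + w) := by
      have h1 : ∀ i, (Qᵀ.mulVec u) i + μv i = (Qᵀ.mulVec (u + w)) i := by
        intro i
        rw [hμ, Matrix.mulVec_add]
        rfl
      calc ∑ i, ((Qᵀ.mulVec u) i + μv i) ^ 2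
          = ∑ i, ((Qᵀ.mulVec (u + w)) i) ^ 2 := by
            exact Finset.sum_congr rfl fun i _ => by rw [h1]
        _ = (Qᵀ.mulVec (u + w)) ⬝ᵥ (Qᵀ.mulVec (u + w)) := by
            simp [dotProduct, sq]
        _ = (u + w) ⬝ᵥ ((Qᵀᵀ * Qᵀ).mulVec (u + w)) := dotProduct_mulVec_mulVec Qᵀ Qᵀ _ _
        _ = (u + w) ⬝ᵥ A.mulVec (u + w) := by rw [Matrix.transpose_transpose, hQQt]
    rw [hRHS]
    have hT1 : (R.mulVec ρ) ⬝ᵥ Rinv.mulVec (R.mulVec ρ) = ρ ⬝ᵥ R.mulVec ρ := by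
      rw [Matrix.mulVec_mulVec, dotProduct_mulVec_mulVec R (Rinv * R) ρ ρ, hRsymm,
        ← Matrix.mul_assoc, hgen]
    have hT2 : (R.mulVec ρ) ⬝ᵥ Rinv.mulVec (W.mulVec u) = w ⬝ᵥ A.mulVec u := by
      rw [Matrix.mulVec_mulVec, dotProduct_mulVec_mulVec R (Rinv * W) ρ u, hRsymm,
        ← Matrix.mul_assoc, hw, dotProduct_mulVec_mulVec Wᵀ A ρ u,
        Matrix.transpose_transpose, hWA]
    have hT3 : (W.mulVec u) ⬝ᵥ Rinv.mulVec (R.mulVec ρ) = u ⬝ᵥ A.mulVec w := by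
      rw [Matrix.mulVec_mulVec, dotProduct_mulVec_mulVec W (Rinv * R) u ρ,
        ← Matrix.mul_assoc, ← hAW, hw, ← Matrix.mulVec_mulVec]
    have hT4 : (W.mulVec u) ⬝ᵥ Rinv.mulVec (W.mulVec u) = u ⬝ᵥ A.mulVec u := by
      rw [Matrix.mulVec_mulVec, dotProduct_mulVec_mulVec W (Rinv * W) u u,
        ← Matrix.mul_assoc, hA]
    simp only [Matrix.mulVec_add, add_dotProduct, dotProduct_add]
    rw [hT1, hT2, hT3, hT4, hwAw]
    ring
  -- the quadratic-form map pushes forward to the noncentral chi-square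
  have hmapQ : Measure.map (fun u : Fin n → ℝ => Qᵀ.mulVec u) (stdGaussian n)
      = stdGaussian r := by
    have hfun : (fun u : Fin n → ℝ => Qᵀ.mulVec u)
        = (fun x : Fin n → ℝ => fun i : Fin r => x (Fin.castLE hrn i))
          ∘ (fun v : Fin n → ℝ => O.mulVec v) := by
      funext u
      funext i
      show (Qᵀ.mulVec u) i = (O.mulVec u) (Fin.castLE hrn i)
      simp only [Matrix.mulVec, dotProduct, Matrix.transpose_apply, hOQ]
    rw [hfun, ← Measure.map_map (measurable_pi_lambda _ fun i => measurable_pi_apply _)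
      (measurable_mulVec O), map_mulVec_stdGaussian O hOOt, map_restrict_stdGaussian hrn]
  refine ⟨μv, hnc, ?_⟩
  have hq : Measurable fun x : Fin n → ℝ => x ⬝ᵥ Rinv.mulVec x := by
    simp only [dotProduct]
    refine Finset.measurable_sum _ fun i _ => ?_
    exact (measurable_pi_apply i).mul ((measurable_pi_apply i).comp (measurable_mulVec Rinv))
  have haff : Measurable fun u : Fin n → ℝ => R.mulVec ρ + W.mulVec u :=
    (measurable_mulVec W).const_add _
  have hg : Measurable fun v : Fin r → ℝ => ∑ i, (v i + μv i) ^ 2 := by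
    refine Finset.measurable_sum _ fun i _ => ?_
    exact ((measurable_pi_apply i).add_const _).pow_const 2
  calc Measure.map (fun ω => z ω ⬝ᵥ Rinv.mulVec (z ω)) P
      = Measure.map (fun x : Fin n → ℝ => x ⬝ᵥ Rinv.mulVec x) (Measure.map z P) :=
        (Measure.map_map hq hz).symm
    _ = Measure.map (fun x : Fin n → ℝ => x ⬝ᵥ Rinv.mulVec x)
          (Measure.map (fun u => R.mulVec ρ + W.mulVec u) (stdGaussian n)) := by rw [hlaw]
    _ = Measure.map ((fun x : Fin n → ℝ => x ⬝ᵥ Rinv.mulVec x)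
          ∘ (fun u => R.mulVec ρ + W.mulVec u)) (stdGaussian n) := Measure.map_map hq haff
    _ = Measure.map ((fun v : Fin r → ℝ => ∑ i, (v i + μv i) ^ 2)
          ∘ (fun u : Fin n → ℝ => Qᵀ.mulVec u)) (stdGaussian n) := by
        congr 1
        funext u
        exact hkey u
    _ = Measure.map (fun v : Fin r → ℝ => ∑ i, (v i + μv i) ^ 2)
          (Measure.map (fun u : Fin n → ℝ => Qᵀ.mulVec u) (stdGaussian n)) :=
        (Measure.map_map hg (measurable_mulVec Qᵀ)).symm
    _ = Measure.map (fun u => ∑ i, (u i + μv i) ^ 2) (stdGaussian r) := by rw [hmapQ]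
end

section
/- Let P = Z(Z'Z)⁻¹Z', where Z has k columns, with D = diag(P) and all P_ii < 1, and define B = (I−P)D(I−D)⁻¹(I−P). Then B Z = 0 and tr(B) = tr(D(I−D)⁻¹(I−P)) = tr(P) = k. -/
open Matrix

lemma aux_isUnit_det {k : ℕ} (A : Matrix (Fin k) (Fin k) ℝ) (h : A.rank = k) :
    IsUnit A.det := by
  have hrange : LinearMap.range A.mulVecLin = ⊤ := by
    apply Submodule.eq_top_of_finrank_eq
    rw [← Matrix.rank, h]
    simp [Module.finrank_fintype_fun_eq_card]
  have hsurj : Function.Surjective A.mulVecLin := LinearMap.range_eq_top.mp hrange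
  have hinj : Function.Injective A.mulVecLin :=
    (LinearMap.injective_iff_surjective).mpr hsurj
  rw [isUnit_iff_ne_zero]
  intro hdet
  obtain ⟨v, hv0, hv⟩ := (Matrix.exists_mulVec_eq_zero_iff).mpr hdet
  apply hv0
  have h2 : A.mulVecLin v = A.mulVecLin 0 := by
    simp [Matrix.mulVecLin_apply, hv]
  simpa using hinj h2

/-- For `P = Z(Z'Z)⁻¹Z'` with `Z` of full column rank `k`, `D = diag(P)` with all `P_ii < 1`,
and `B = (I−P)D(I−D)⁻¹(I−P)`: `BZ = 0`, `tr(B) = tr(D(I−D)⁻¹(I−P))`, and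
`tr(B) = tr(P) = k`. -/
theorem jackknife_B_annihilates_Z_and_trace
    {n k : ℕ} (Z : Matrix (Fin n) (Fin k) ℝ) (hZ : Z.rank = k)
    (P : Matrix (Fin n) (Fin n) ℝ)
    (hP : P = Z * (Z.transpose * Z)⁻¹ * Z.transpose)
    (hdiag : ∀ i, P i i < 1)
    (D B : Matrix (Fin n) (Fin n) ℝ)
    (hD : D = Matrix.diagonal (fun i => P i i))
    (hB : B = (1 - P) * D * (1 - D)⁻¹ * (1 - P)) :
    B * Z = 0 ∧
    B.trace = (D * (1 - D)⁻¹ * (1 - P)).trace ∧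
    B.trace = P.trace ∧ P.trace = (k : ℝ) := by
  have hU : IsUnit (Z.transpose * Z).det :=
    aux_isUnit_det _ (by rw [Matrix.rank_transpose_mul_self]; exact hZ)
  have hinv : (Z.transpose * Z)⁻¹ * (Z.transpose * Z) = 1 := Matrix.nonsing_inv_mul _ hU
  have hPZ : P * Z = Z := by
    rw [hP, Matrix.mul_assoc, Matrix.mul_assoc, hinv, Matrix.mul_one]
  have hPP : P * P = P := by
    calc P * P = P * (Z * (Z.transpose * Z)⁻¹ * Z.transpose) := by rw [← hP]
    _ = P := by rw [← Matrix.mul_assoc, ← Matrix.mul_assoc, hPZ, ← hP]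
  have h1PZ : (1 - P) * Z = 0 := by
    rw [Matrix.sub_mul, Matrix.one_mul, hPZ, sub_self]
  have hidem : (1 - P) * (1 - P) = 1 - P := by
    simp [sub_mul, mul_sub, hPP]
  have hne : ∀ i, (1 : ℝ) - P i i ≠ 0 := fun i => sub_ne_zero_of_ne (hdiag i).ne'
  have hBZ : B * Z = 0 := by
    rw [hB, Matrix.mul_assoc ((1 - P) * D * (1 - D)⁻¹) (1 - P) Z, h1PZ, Matrix.mul_zero]
  have htr2 : B.trace = (D * (1 - D)⁻¹ * (1 - P)).trace := by
    have e : B = (1 - P) * (D * (1 - D)⁻¹ * (1 - P)) := by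
      rw [hB]; simp only [Matrix.mul_assoc]
    rw [e, Matrix.trace_mul_comm, Matrix.mul_assoc (D * (1 - D)⁻¹) (1 - P) (1 - P), hidem]
  have h1D : (1 : Matrix (Fin n) (Fin n) ℝ) - D = Matrix.diagonal (fun i => 1 - P i i) := by
    rw [hD]
    ext i j
    by_cases h : i = j <;> simp [Matrix.one_apply, Matrix.diagonal_apply, h]
  have hinvD : (1 - D)⁻¹ = Matrix.diagonal (fun i => ((1 : ℝ) - P i i)⁻¹) := by
    rw [h1D]
    apply Matrix.inv_eq_right_inv
    rw [Matrix.diagonal_mul_diagonal, ← Matrix.diagonal_one]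
    exact congrArg Matrix.diagonal (funext fun i => mul_inv_cancel₀ (hne i))
  have htr3 : (D * (1 - D)⁻¹ * (1 - P)).trace = P.trace := by
    rw [hinvD, hD, Matrix.diagonal_mul_diagonal, Matrix.trace, Matrix.trace]
    apply Finset.sum_congr rfl
    intro i _
    simp only [Matrix.diag, Matrix.diagonal_mul, Matrix.sub_apply, Matrix.one_apply_eq]
    rw [mul_assoc, inv_mul_cancel₀ (hne i), mul_one]
  have htrP : P.trace = (k : ℝ) := by
    rw [hP, Matrix.trace_mul_cycle, Matrix.mul_nonsing_inv _ hU, Matrix.trace_one]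
    simp
  exact ⟨hBZ, htr2, htr2.trans htr3, htrP⟩
end
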